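/- Regard S as a function of the separation constant ψ₀ as well, S(R,ψ,ψ₀) = R sin(ψ − ψ₀) − ∫₀^ψ l(t) cos(t − ψ₀) dt. Then for every (R,ψ,ψ₀) the partial derivative of S with respect to ψ₀ exists and equals −(sin ψ₀ · F₁(R,ψ) + cos ψ₀ · F₂(R,ψ)), where F₁, F₂ are the two components of F; thus differentiating the solution with respect to the constant ψ₀ again yields a linear combination of the Cartesian coordinate functions, so by the Jacobi theorem the lines S = const are straight lines. -/

import Mathlib

open Real

/-- Equation (9) of the paper: Cartesian coordinates as functions of the
coordinates `(R, ψ)` built from the tangent rays of a basic curve. -/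
noncomputable def F (l : ℝ → ℝ) (p : ℝ × ℝ) : ℝ × ℝ :=
  (p.1 * Real.sin p.2 - ∫ t in (0:ℝ)..p.2, l t * Real.cos t,
   p.1 * Real.cos p.2 + ∫ t in (0:ℝ)..p.2, l t * Real.sin t)

/-- The separated solution of the Hamilton–Jacobi equation for straight lines,
regarded also as a function of the separation constant `ψ₀`. -/
noncomputable def S (l : ℝ → ℝ) (R ψ ψ₀ : ℝ) : ℝ :=
  R * Real.sin (ψ - ψ₀) - ∫ t in (0:ℝ)..ψ, l t * Real.cos (t - ψ₀)

/-! Expanding `cos (t - ψ₀)` takes `ψ₀` out of the integral, so `S` is a trigonometric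
polynomial in `ψ₀` whose coefficients are the two integrals occurring in `F`. -/

open MeasureTheory

theorem intervalIntegral_mul_cos_sub {f : ℝ → ℝ} {a b : ℝ}
    (hf : IntervalIntegrable f volume a b) (c : ℝ) :
    ∫ t in a..b, f t * cos (t - c) =
      cos c * (∫ t in a..b, f t * cos t) + sin c * ∫ t in a..b, f t * sin t := by
  have hcos := hf.mul_continuousOn continuous_cos.continuousOn
  have hsin := hf.mul_continuousOn continuous_sin.continuousOn
  rw [← intervalIntegral.integral_const_mul, ← intervalIntegral.integral_const_mul,
    ← intervalIntegral.integral_add (hcos.const_mul _) (hsin.const_mul _)]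
  congr 1 with t
  rw [cos_sub]
  ring

theorem S_eq_trigPoly {l : ℝ → ℝ} {ψ : ℝ} (hl : IntervalIntegrable l volume 0 ψ) (R c : ℝ) :
    S l R ψ c = R * sin (ψ - c) -
      (cos c * (∫ t in (0:ℝ)..ψ, l t * cos t) + sin c * ∫ t in (0:ℝ)..ψ, l t * sin t) := by
  rw [S, intervalIntegral_mul_cos_sub hl]

theorem hasDerivAt_sin_const_sub (a x : ℝ) :
    HasDerivAt (fun c => sin (a - c)) (-cos (a - x)) x := by
  simpa using ((hasDerivAt_id x).const_sub a).sin

/-- Differentiating the solution with respect to the constant `ψ₀` again yields a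
linear combination of the Cartesian coordinate functions (Jacobi's theorem). -/
theorem stmt_11 (l : ℝ → ℝ) (hl : Continuous l) (R ψ ψ₀ : ℝ) :
    HasDerivAt (fun c => S l R ψ c)
      (-(Real.sin ψ₀ * (F l (R, ψ)).1 + Real.cos ψ₀ * (F l (R, ψ)).2)) ψ₀ := by
  set A := ∫ t in (0:ℝ)..ψ, l t * cos t
  set B := ∫ t in (0:ℝ)..ψ, l t * sin t
  have hS : (fun c => S l R ψ c) = fun c => R * sin (ψ - c) - (cos c * A + sin c * B) :=
    funext (S_eq_trigPoly (hl.intervalIntegrable 0 ψ) R)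
  have hderiv := ((hasDerivAt_sin_const_sub ψ ψ₀).const_mul R).sub
    (((hasDerivAt_cos ψ₀).mul_const A).add ((hasDerivAt_sin ψ₀).mul_const B))
  rw [hS]
  refine hderiv.congr_deriv ?_
  simp only [F, cos_sub]
  ring
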